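/- Let X be a non-negative absolutely continuous random variable with weighted residual entropy H^w(t), weighted past entropy H̄^w(t), conditional mean δ(t) = E(X | X > t) and mean past lifetime μ(t) = E(X | X ≤ t). Then for all a > 0 and t > 0: H^w_{aX}(t) = a H^w(t/a) + δ(t/a) · a log a, and H̄^w_{aX}(t) = a H̄^w(t/a) + μ(t/a) · a log a. -/

import Mathlib

open MeasureTheory

/-- Survival function `F̄(t) = ∫_t^∞ f(x) dx` of a density `f`. -/
noncomputable def survFn (f : ℝ → ℝ) (t : ℝ) : ℝ := ∫ x in Set.Ioi t, f x

/-- Distribution function `F(t) = ∫_{-∞}^t f(x) dx` of a density `f`. -/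
noncomputable def distFn (f : ℝ → ℝ) (t : ℝ) : ℝ := ∫ x in Set.Iic t, f x

/-- Residual entropy `H(t) = -∫_t^∞ (f(x)/F̄(t)) log (f(x)/F̄(t)) dx`. -/
noncomputable def resEnt (f : ℝ → ℝ) (t : ℝ) : ℝ :=
  -∫ x in Set.Ioi t, f x / survFn f t * Real.log (f x / survFn f t)

/-- Weighted residual entropy `H^w(t) = -∫_t^∞ x (f(x)/F̄(t)) log (f(x)/F̄(t)) dx`. -/
noncomputable def wResEnt (f : ℝ → ℝ) (t : ℝ) : ℝ :=
  -∫ x in Set.Ioi t, x * (f x / survFn f t) * Real.log (f x / survFn f t)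

/-- Past entropy `H̄(t) = -∫_0^t (f(x)/F(t)) log (f(x)/F(t)) dx`. -/
noncomputable def pastEnt (f : ℝ → ℝ) (t : ℝ) : ℝ :=
  -∫ x in Set.Ioc 0 t, f x / distFn f t * Real.log (f x / distFn f t)

/-- Weighted past entropy `H̄^w(t) = -∫_0^t x (f(x)/F(t)) log (f(x)/F(t)) dx`. -/
noncomputable def wPastEnt (f : ℝ → ℝ) (t : ℝ) : ℝ :=
  -∫ x in Set.Ioc 0 t, x * (f x / distFn f t) * Real.log (f x / distFn f t)

/-- The support `S = (0, ν)` (with `ν ≤ +∞`) as a subset of `ℝ`. -/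
def supS (ν : EReal) : Set ℝ := {x : ℝ | 0 < x ∧ (x : EReal) < ν}

/-! A change of variables `x = a y` turns the weighted entropies of `aX` into integrals over the
original range, and `log (u / a) = log u - log a` splits off the extra term `log a` times the
conditional mean. -/

open Real Set LinearOrderedField
open scoped Pointwise

theorem setIntegral_smul_set {E : Type*} [NormedAddCommGroup E] [NormedSpace ℝ E]
    {a : ℝ} (ha : 0 < a) (g : ℝ → E) (s : Set ℝ) :
    ∫ x in a • s, g x = a • ∫ x in s, g (a * x) := by
  have h := Measure.setIntegral_comp_smul_of_pos volume g s ha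
  simp only [smul_eq_mul, Module.finrank_self, pow_one] at h
  rw [h, smul_inv_smul₀ ha.ne']

theorem setIntegral_smul_set_rescale {a : ℝ} (ha : 0 < a) (f : ℝ → ℝ) (s : Set ℝ) :
    ∫ x in a • s, 1 / a * f (x / a) = ∫ x in s, f x := by
  simp only [setIntegral_smul_set ha, mul_div_cancel_left₀ _ ha.ne', integral_const_mul,
    smul_eq_mul, ← mul_assoc, mul_one_div_cancel ha.ne', one_mul]

-- An identity without side conditions, thanks to `log 0 = 0` and `y / 0 = 0`.
theorem mul_div_mul_log_div (x y c : ℝ) :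
    x * (y / c) * log (y / c) = (x * y * log y - log c * (x * y)) / c := by
  rcases eq_or_ne y 0 with rfl | hy
  · simp
  rcases eq_or_ne c 0 with rfl | hc
  · simp
  rw [log_div hy hc]
  ring

theorem integrable_mul_div_mul_log_div {f : ℝ → ℝ} (c : ℝ)
    (hmean : Integrable (fun x => x * f x))
    (hwent : Integrable (fun x => x * f x * log (f x))) :
    Integrable (fun x => x * (f x / c) * log (f x / c)) := by
  simp only [mul_div_mul_log_div]
  exact (hwent.sub (hmean.const_mul (log c))).div_const c

theorem setIntegral_weighted_entropy_rescale {f : ℝ → ℝ} {a : ℝ} (ha : 0 < a) (S : ℝ)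
    (hmean : Integrable (fun x => x * f x))
    (hwent : Integrable (fun x => x * f x * log (f x))) (s : Set ℝ) :
    ∫ x in a • s, x * (1 / a * f (x / a) / S) * log (1 / a * f (x / a) / S)
      = a * (∫ x in s, x * (f x / S) * log (f x / S))
        - a * log a * ((∫ x in s, x * f x) / S) := by
  have pointwise : ∀ x, a * x * (1 / a * f (a * x / a) / S) * log (1 / a * f (a * x / a) / S)
      = x * (f x / S) * log (f x / S) - log a * (x * f x / S) := by
    intro x
    rw [mul_div_cancel_left₀ _ ha.ne', show 1 / a * f x / S = f x / S / a by ring,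
      mul_div_mul_log_div]
    field_simp
  simp only [setIntegral_smul_set ha, smul_eq_mul, pointwise]
  rw [integral_sub (integrable_mul_div_mul_log_div S hmean hwent).integrableOn
      ((hmean.div_const S).const_mul (log a)).integrableOn,
    integral_const_mul, integral_div]
  ring

theorem wEnt_scale_general (f : ℝ → ℝ) (a t : ℝ) (ha : 0 < a)
    (hmean : Integrable (fun x => x * f x))
    (hwent : Integrable (fun x => x * f x * Real.log (f x))) :
    wResEnt (fun x => 1 / a * f (x / a)) t
        = a * wResEnt f (t / a)
          + (∫ x in Set.Ioi (t / a), x * f x) / survFn f (t / a) * (a * Real.log a)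
    ∧ wPastEnt (fun x => 1 / a * f (x / a)) t
        = a * wPastEnt f (t / a)
          + (∫ x in Set.Ioc 0 (t / a), x * f x) / distFn f (t / a) * (a * Real.log a) := by
  have hIoi : Ioi t = a • Ioi (t / a) := by rw [smul_Ioi ha, mul_div_cancel₀ _ ha.ne']
  have hIic : Iic t = a • Iic (t / a) := by rw [smul_Iic ha, mul_div_cancel₀ _ ha.ne']
  have hIoc : Ioc 0 t = a • Ioc 0 (t / a) := by
    rw [smul_Ioc ha, mul_zero, mul_div_cancel₀ _ ha.ne']
  have hsurv : survFn (fun x => 1 / a * f (x / a)) t = survFn f (t / a) := by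
    rw [survFn, hIoi, setIntegral_smul_set_rescale ha, survFn]
  have hdist : distFn (fun x => 1 / a * f (x / a)) t = distFn f (t / a) := by
    rw [distFn, hIic, setIntegral_smul_set_rescale ha, distFn]
  constructor
  · rw [wResEnt, hsurv, hIoi, setIntegral_weighted_entropy_rescale ha _ hmean hwent, wResEnt]
    ring
  · rw [wPastEnt, hdist, hIoc, setIntegral_weighted_entropy_rescale ha _ hmean hwent, wPastEnt]
    ring

/-- Let `X` be a non-negative absolutely continuous random variable
with density `f`, weighted residual entropy `H^w`, weighted past entropy `H̄^w`,
conditional mean `δ(t) = E(X | X > t) = (1/F̄(t)) ∫_t^∞ x f(x) dx` and mean past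
lifetime `μ(t) = E(X | X ≤ t) = (1/F(t)) ∫_0^t x f(x) dx`. For `a > 0`, the random
variable `aX` has density `x ↦ (1/a) f(x/a)`, and for all `t > 0`:
`H^w_{aX}(t) = a H^w(t/a) + δ(t/a) a log a` and
`H̄^w_{aX}(t) = a H̄^w(t/a) + μ(t/a) a log a`. -/
theorem wEnt_scale (f : ℝ → ℝ) (a t : ℝ) (ha : 0 < a) (ht : 0 < t)
    (hf_nonneg : ∀ x, 0 ≤ f x) (hf_supp : ∀ x, x < 0 → f x = 0)
    (hf_dens : ∫ x, f x = 1)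
    (hmean : Integrable (fun x => x * f x))
    (hent : Integrable (fun x => f x * Real.log (f x)))
    (hwent : Integrable (fun x => x * f x * Real.log (f x)))
    (hsurv : 0 < survFn f (t / a)) (hdist : 0 < distFn f (t / a)) :
    wResEnt (fun x => 1 / a * f (x / a)) t
        = a * wResEnt f (t / a)
          + (∫ x in Set.Ioi (t / a), x * f x) / survFn f (t / a) * (a * Real.log a)
    ∧ wPastEnt (fun x => 1 / a * f (x / a)) t
        = a * wPastEnt f (t / a)
          + (∫ x in Set.Ioc 0 (t / a), x * f x) / distFn f (t / a) * (a * Real.log a) :=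
  wEnt_scale_general f a t ha hmean hwent
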